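/- arXiv:0912.4100 — 2 statements merged into one kernel-verified Lean document; each statement's English description precedes it below -/
import Mathlib

section
/- Let θ be a real number and suppose G is θ-super positive. Then for each vertex v of G there exists a vertex u adjacent to v such that mult(θ, G\{u,v}) = 0. -/
/-!
Counting matchings according to whether, and with which neighbour `u`, they cover a vertex `v`
gives the recurrence `μ(G) = x μ(G \ v) - ∑_{u ∼ v} μ(G \ {u, v})`. Evaluate it at `θ`: the
first term vanishes because `θ` is a root of `μ(G \ v)`, while the left side does not because
`θ` is not a root of `μ(G)`. Hence some `μ(G \ {u, v})` with `u ∼ v` is nonzero at `θ`.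
-/

open Polynomial

namespace MatchPoly

variable {V : Type*}

/-- The number of `r`-matchings in `G`: sets of `r` edges, no two sharing a vertex. -/
noncomputable def numMatchings (G : SimpleGraph V) (r : ℕ) : ℕ :=
  Nat.card {M : Finset (Sym2 V) // M.card = r ∧ (M : Set (Sym2 V)) ⊆ G.edgeSet ∧
    (M : Set (Sym2 V)).Pairwise fun e f => ∀ v : V, v ∈ e → v ∉ f}

/-- The matching polynomial `μ(G,x) = ∑ (-1)^r p(G,r) x^(n-2r)`. -/
noncomputable def matchingPoly (G : SimpleGraph V) : Polynomial ℝ :=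
  ∑ r ∈ Finset.range (Nat.card V + 1),
    Polynomial.C ((-1 : ℝ) ^ r * (numMatchings G r : ℝ)) *
      (Polynomial.X : Polynomial ℝ) ^ (Nat.card V - 2 * r)

/-- `mult θ G`: the multiplicity of `θ` as a root of `μ(G,x)`. -/
noncomputable def mult (θ : ℝ) (G : SimpleGraph V) : ℕ :=
  (matchingPoly G).rootMultiplicity θ

/-- `G \ X`: the induced subgraph on the complement of the vertex set `X`. -/
def deleteSet (G : SimpleGraph V) (X : Set V) : SimpleGraph ↥(Xᶜ) :=
  G.induce (Xᶜ)

/-- `G \ v`: delete a single vertex. -/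
def deleteVert (G : SimpleGraph V) (v : V) : SimpleGraph ↥({v}ᶜ : Set V) :=
  G.induce ({v}ᶜ : Set V)

/-- `u` is θ-essential: `mult(θ, G\u) = mult(θ,G) - 1`. -/
def IsEssential (θ : ℝ) (G : SimpleGraph V) (u : V) : Prop :=
  mult θ (deleteVert G u) + 1 = mult θ G

/-- `u` is θ-neutral: `mult(θ, G\u) = mult(θ,G)`. -/
def IsNeutral (θ : ℝ) (G : SimpleGraph V) (u : V) : Prop :=
  mult θ (deleteVert G u) = mult θ G

/-- `u` is θ-positive: `mult(θ, G\u) = mult(θ,G) + 1`. -/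
def IsPositive (θ : ℝ) (G : SimpleGraph V) (u : V) : Prop :=
  mult θ (deleteVert G u) = mult θ G + 1

/-- `u` is θ-special: not θ-essential but adjacent to a θ-essential vertex. -/
def IsSpecial (θ : ℝ) (G : SimpleGraph V) (u : V) : Prop :=
  ¬ IsEssential θ G u ∧ ∃ w : V, G.Adj u w ∧ IsEssential θ G w

/-- `A_θ(G)`: the set of θ-special vertices. -/
def specialSet (θ : ℝ) (G : SimpleGraph V) : Set V := {u | IsSpecial θ G u}

/-- `N_θ(G)`: the set of θ-neutral vertices. -/
def neutralSet (θ : ℝ) (G : SimpleGraph V) : Set V := {u | IsNeutral θ G u}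

/-- `P_θ(G)`: the set of θ-positive vertices that are not θ-special. -/
def positiveSet (θ : ℝ) (G : SimpleGraph V) : Set V :=
  {u | IsPositive θ G u ∧ ¬ IsSpecial θ G u}

/-- `G` is θ-super positive: `mult(θ,G) = 0` and `mult(θ,G\v) = 1` for every vertex `v`. -/
def IsSuperPositive (θ : ℝ) (G : SimpleGraph V) : Prop :=
  mult θ G = 0 ∧ ∀ v : V, mult θ (deleteVert G v) = 1

/-- `G` is θ-elementary: θ-super positive and `P_θ(G\v) = ∅` for every vertex `v`. -/
def IsElementary (θ : ℝ) (G : SimpleGraph V) : Prop :=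
  IsSuperPositive θ G ∧ ∀ v : V, positiveSet θ (deleteVert G v) = ∅

/-- `G` is θ-critical: every vertex is θ-essential and `mult(θ,G) = 1`. -/
def IsCritical (θ : ℝ) (G : SimpleGraph V) : Prop :=
  (∀ v : V, IsEssential θ G v) ∧ mult θ G = 1

/-- `c_θ(G)`: the number of θ-critical connected components of `G`. -/
noncomputable def numCritComponents (θ : ℝ) (G : SimpleGraph V) : ℕ :=
  Nat.card {c : G.ConnectedComponent // IsCritical θ (G.induce c.supp)}

/-- `X` is a θ-barrier set: `mult(θ,G) = c_θ(G\X) - |X|`. -/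
def IsBarrier (θ : ℝ) (G : SimpleGraph V) (X : Set V) : Prop :=
  numCritComponents θ (deleteSet G X) = mult θ G + X.ncard

/-- `X` is a θ-extreme set: `mult(θ,G\X) = mult(θ,G) + |X|`. -/
def IsExtreme (θ : ℝ) (G : SimpleGraph V) (X : Set V) : Prop :=
  mult θ (deleteSet G X) = mult θ G + X.ncard

/-- `G` is θ-base: θ-super positive and no θ-barrier set contains two adjacent vertices. -/
def IsBase (θ : ℝ) (G : SimpleGraph V) : Prop :=
  IsSuperPositive θ G ∧
    ∀ X : Set V, IsBarrier θ G X → ∀ u v : V, u ∈ X → v ∈ X → ¬ G.Adj u v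

open Finset

section Matchings

variable {W : Type*}

def EdgesDisjoint (M : Finset (Sym2 V)) : Prop :=
  (M : Set (Sym2 V)).Pairwise fun e f => ∀ v : V, v ∈ e → v ∉ f

open Classical in
noncomputable def matchings (E : Finset (Sym2 V)) (r : ℕ) : Finset (Finset (Sym2 V)) :=
  {M ∈ E.powersetCard r | EdgesDisjoint M}

theorem mem_matchings {E M : Finset (Sym2 V)} {r : ℕ} :
    M ∈ matchings E r ↔ M ⊆ E ∧ #M = r ∧ EdgesDisjoint M := by
  simp [matchings, mem_powersetCard, and_assoc]

theorem numMatchings_eq_card_matchings [Fintype V] (G : SimpleGraph V) [DecidableRel G.Adj]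
    (r : ℕ) : numMatchings G r = #(matchings G.edgeFinset r) :=
  Nat.subtype_card _ fun M => by
    rw [mem_matchings, ← coe_subset, SimpleGraph.coe_edgeFinset, EdgesDisjoint]
    tauto

theorem EdgesDisjoint.sym2Map_iff (f : V ↪ W) {M : Finset (Sym2 V)} :
    EdgesDisjoint (M.map f.sym2Map) ↔ EdgesDisjoint M := by
  rw [EdgesDisjoint, EdgesDisjoint, coe_map, f.sym2Map.injective.injOn.pairwise_image]
  refine forall₄_congr fun e _ e' _ => imp_congr_right fun _ => ?_
  simp only [Function.onFun, Function.Embedding.sym2Map_apply, Sym2.mem_map,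
    forall_exists_index, and_imp, not_exists, not_and]
  constructor
  · exact fun h x hx hx' => h (f x) x hx rfl x hx' rfl
  · rintro h _ x hx rfl y hy hxy
    exact h x hx (f.injective hxy ▸ hy)

theorem matchings_map (f : V ↪ W) (E : Finset (Sym2 V)) (r : ℕ) :
    matchings (E.map f.sym2Map) r =
      (matchings E r).map (mapEmbedding f.sym2Map).toEmbedding := by
  classical
  simp only [matchings, powersetCard_map, filter_map]
  congr 1
  exact filter_congr fun M _ => EdgesDisjoint.sym2Map_iff f

theorem numMatchings_deleteSet [Fintype V] [DecidableEq V] (G : SimpleGraph V)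
    [DecidableRel G.Adj] (X : Set V) [DecidablePred (· ∈ Xᶜ)] (r : ℕ) :
    numMatchings (deleteSet G X) r = #(matchings (G.edgeFinset ∩ Xᶜ.toFinset.sym2) r) := by
  rw [deleteSet, numMatchings_eq_card_matchings, ← SimpleGraph.map_edgeFinset_induce,
    matchings_map, card_map]

theorem numMatchings_zero (G : SimpleGraph V) : numMatchings G 0 = 1 := by
  rw [numMatchings, Nat.card_eq_one_iff_unique]
  refine ⟨⟨fun M N => Subtype.ext ?_⟩, ⟨⟨∅, rfl, by simp, by simp⟩⟩⟩
  rw [card_eq_zero.mp M.2.1, card_eq_zero.mp N.2.1]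

theorem EdgesDisjoint.two_mul_card_le [Fintype V] {M : Finset (Sym2 V)} (hM : EdgesDisjoint M)
    (hdiag : ∀ e ∈ M, ¬ e.IsDiag) : 2 * #M ≤ Fintype.card V := by
  classical
  calc 2 * #M = ∑ e ∈ M, #e.toFinset := by
        rw [sum_congr rfl fun e he => Sym2.card_toFinset_of_not_isDiag e (hdiag e he),
          sum_const, smul_eq_mul, mul_comm]
    _ = #(M.biUnion Sym2.toFinset) := by
        refine (card_biUnion fun e he f hf hef => disjoint_left.mpr fun x hx hx' => ?_).symm
        exact hM he hf hef x (Sym2.mem_toFinset.mp hx) (Sym2.mem_toFinset.mp hx')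
    _ ≤ Fintype.card V := card_le_univ _

theorem numMatchings_eq_zero_of_card_lt [Finite V] (G : SimpleGraph V) {r : ℕ}
    (h : Nat.card V < 2 * r) : numMatchings G r = 0 := by
  classical
  cases nonempty_fintype V
  rw [numMatchings_eq_card_matchings, card_eq_zero, eq_empty_iff_forall_notMem]
  intro M hM
  obtain ⟨hME, rfl, hdisj⟩ := mem_matchings.mp hM
  have := hdisj.two_mul_card_le fun e he =>
    G.not_isDiag_of_mem_edgeSet (SimpleGraph.mem_edgeFinset.mp (hME he))
  rw [Nat.card_eq_fintype_card] at h
  omega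

end Matchings

section Recurrence

variable [Fintype V] [DecidableEq V]

theorem mem_matchings_inter_sym2 {E M : Finset (Sym2 V)} {X : Set V} [Fintype ↑Xᶜ] {r : ℕ} :
    M ∈ matchings (E ∩ Xᶜ.toFinset.sym2) r ↔ M ∈ matchings E r ∧ ∀ e ∈ M, ∀ x ∈ e, x ∉ X := by
  have hsym2 : M ⊆ Xᶜ.toFinset.sym2 ↔ ∀ e ∈ M, ∀ x ∈ e, x ∉ X := by
    simp [subset_iff, mem_sym2_iff]
  rw [mem_matchings, mem_matchings, subset_inter_iff, hsym2]
  tauto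

theorem card_filter_mem_matchings {E : Finset (Sym2 V)} {u v : V} (huv : s(u, v) ∈ E)
    [Fintype ↑({u, v} : Set V)ᶜ] (r : ℕ) :
    #{M ∈ matchings E (r + 1) | s(u, v) ∈ M} =
      #(matchings (E ∩ ({u, v} : Set V)ᶜ.toFinset.sym2) r) := by
  have huv_mem : ∀ x ∈ s(u, v), x ∈ ({u, v} : Set V) := by simp [Sym2.mem_iff]
  refine card_nbij' (·.erase s(u, v)) (insert s(u, v)) ?_ ?_ ?_ ?_
  · intro M hM
    simp only [coe_filter, Set.mem_ofPred_eq, mem_coe] at hM ⊢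
    rw [mem_matchings] at hM
    rw [mem_matchings_inter_sym2, mem_matchings]
    obtain ⟨⟨hME, hcard, hdisj⟩, huvM⟩ := hM
    refine ⟨⟨(erase_subset _ _).trans hME, by rw [card_erase_of_mem huvM, hcard]; rfl,
      hdisj.mono (by simp)⟩, fun e he x hxe hxX => ?_⟩
    obtain ⟨hne, heM⟩ := mem_erase.mp he
    rcases hxX with rfl | rfl
    · exact hdisj heM huvM hne x hxe (Sym2.mem_mk_left _ _)
    · exact hdisj heM huvM hne x hxe (Sym2.mem_mk_right _ _)
  · intro M hM
    simp only [coe_filter, Set.mem_ofPred_eq, mem_coe] at hM ⊢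
    rw [mem_matchings_inter_sym2, mem_matchings] at hM
    rw [mem_matchings]
    obtain ⟨⟨hME, hcard, hdisj⟩, havoid⟩ := hM
    have huvM : s(u, v) ∉ M := fun h => havoid _ h u (Sym2.mem_mk_left _ _) (by simp)
    refine ⟨⟨insert_subset huv hME, by rw [card_insert_of_notMem huvM, hcard], ?_⟩,
      mem_insert_self _ _⟩
    rw [EdgesDisjoint, coe_insert, Set.pairwise_insert_of_notMem huvM]
    exact ⟨hdisj, fun e he => ⟨fun x hx hxe => havoid e he x hxe (huv_mem x hx),
      fun x hxe hx => havoid e he x hxe (huv_mem x hx)⟩⟩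
  · intro M hM
    exact insert_erase (mem_filter.mp hM).2
  · intro M hM
    exact erase_insert fun h =>
      (mem_matchings_inter_sym2.mp hM).2 _ h u (Sym2.mem_mk_left _ _) (by simp)

theorem card_matchings_sdiff_eq_sum_neighborFinset (G : SimpleGraph V) [DecidableRel G.Adj] (v : V)
    [Fintype ↑({v} : Set V)ᶜ] (r : ℕ) :
    #(matchings G.edgeFinset r \ matchings (G.edgeFinset ∩ ({v} : Set V)ᶜ.toFinset.sym2) r) =
      ∑ u ∈ G.neighborFinset v, #{M ∈ matchings G.edgeFinset r | s(u, v) ∈ M} := by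
  rw [← card_biUnion]
  · congr 1
    ext M
    simp only [mem_sdiff, mem_matchings_inter_sym2, mem_filter, mem_biUnion,
      SimpleGraph.mem_neighborFinset, Set.mem_singleton_iff]
    constructor
    · rintro ⟨hM, hcover⟩
      push Not at hcover
      obtain ⟨e, heM, x, hxe, rfl⟩ := hcover hM
      obtain ⟨u, rfl⟩ := Sym2.mem_iff_exists.mp hxe
      refine ⟨u, ?_, hM, Sym2.eq_swap ▸ heM⟩
      exact SimpleGraph.mem_edgeFinset.mp ((mem_matchings.mp hM).1 heM)
    · rintro ⟨u, -, hM, huvM⟩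
      exact ⟨hM, fun h => h.2 _ huvM v (Sym2.mem_mk_right _ _) rfl⟩
  · intro u _ u' _ huu'
    refine disjoint_left.mpr fun M hM hM' => ?_
    simp only [mem_filter, mem_matchings] at hM hM'
    exact hM.1.2.2 hM.2 hM'.2 (fun h => huu' (Sym2.congr_left.mp h)) v
      (Sym2.mem_mk_right _ _) (Sym2.mem_mk_right _ _)

end Recurrence

theorem numMatchings_succ [Fintype V] (G : SimpleGraph V) [DecidableRel G.Adj] (v : V) (r : ℕ) :
    numMatchings G (r + 1) = numMatchings (deleteVert G v) (r + 1) +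
      ∑ u ∈ G.neighborFinset v, numMatchings (deleteSet G {u, v}) r := by
  classical
  have hsub : matchings (G.edgeFinset ∩ ({v} : Set V)ᶜ.toFinset.sym2) (r + 1) ⊆
      matchings G.edgeFinset (r + 1) := fun M hM => (mem_matchings_inter_sym2.mp hM).1
  rw [numMatchings_eq_card_matchings, ← card_sdiff_add_card_eq_card hsub,
    card_matchings_sdiff_eq_sum_neighborFinset, show deleteVert G v = deleteSet G {v} from rfl,
    numMatchings_deleteSet, add_comm]
  congr 1
  refine sum_congr rfl fun u hu => ?_
  rw [numMatchings_deleteSet, card_filter_mem_matchings]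
  exact SimpleGraph.mem_edgeFinset.mpr ((G.mem_neighborFinset v u).mp hu).symm

theorem matchingPoly_eq_sum_range [Finite V] (G : SimpleGraph V) {m : ℕ}
    (hm : Nat.card V < 2 * m) :
    matchingPoly G = ∑ r ∈ range m,
      C ((-1 : ℝ) ^ r * (numMatchings G r : ℝ)) * X ^ (Nat.card V - 2 * r) := by
  have hvanish : ∀ r ≥ Nat.card V / 2 + 1,
      C ((-1 : ℝ) ^ r * (numMatchings G r : ℝ)) * X ^ (Nat.card V - 2 * r) = 0 := by
    intro r hr
    rw [numMatchings_eq_zero_of_card_lt G (by omega)]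
    simp
  rw [matchingPoly, eventually_constant_sum hvanish (by omega),
    eventually_constant_sum (n := m) hvanish (by omega)]

theorem coeff_matchingPoly_card (G : SimpleGraph V) :
    (matchingPoly G).coeff (Nat.card V) = 1 := by
  rw [matchingPoly, finsetSum_coeff, sum_eq_single 0]
  · simp [numMatchings_zero]
  · intro r hr hr0
    rw [coeff_C_mul_X_pow, if_neg]
    have := mem_range.mp hr
    omega
  · simp

theorem matchingPoly_ne_zero (G : SimpleGraph V) : matchingPoly G ≠ 0 := fun h => by
  simpa [h] using coeff_matchingPoly_card G


theorem matchingPoly_eq_X_pow_add_sum (G : SimpleGraph V) :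
    matchingPoly G = X ^ Nat.card V + ∑ s ∈ range (Nat.card V),
      C ((-1 : ℝ) ^ (s + 1) * (numMatchings G (s + 1) : ℝ)) * X ^ (Nat.card V - 2 * (s + 1)) := by
  rw [matchingPoly, sum_range_succ', add_comm, numMatchings_zero]
  simp only [pow_zero, Nat.cast_one, mul_one, map_one, one_mul, mul_zero, Nat.sub_zero]

theorem X_mul_matchingPoly_deleteVert [Finite V] (G : SimpleGraph V) (v : V) :
    X * matchingPoly (deleteVert G v) = X ^ Nat.card V + ∑ s ∈ range (Nat.card V),
      C ((-1 : ℝ) ^ (s + 1) * (numMatchings (deleteVert G v) (s + 1) : ℝ)) *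
        X ^ (Nat.card V - 2 * (s + 1)) := by
  have hn : 1 ≤ Nat.card V := Nat.card_pos_iff.mpr ⟨⟨v⟩, inferInstance⟩
  have hcard : Nat.card ↥({v}ᶜ : Set V) = Nat.card V - 1 := by
    rw [Nat.card_coe_set_eq, Set.ncard_compl, Set.ncard_singleton]
  rw [matchingPoly_eq_sum_range _ (m := Nat.card V + 1) (by omega), mul_sum, sum_range_succ',
    add_comm, hcard]
  congr 1
  · simp [numMatchings_zero, ← pow_succ', Nat.sub_add_cancel hn]
  refine sum_congr rfl fun s _ => ?_
  -- for `2 * (s + 1) > Nat.card V - 1` the truncated exponents disagree, but the count is 0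
  by_cases hs : 2 * (s + 1) ≤ Nat.card V - 1
  · rw [mul_left_comm, ← pow_succ']
    congr 2
    omega
  · rw [numMatchings_eq_zero_of_card_lt _ (by omega)]
    simp

theorem matchingPoly_deleteSet_pair [Finite V] (G : SimpleGraph V) {u v : V} (huv : u ≠ v) :
    matchingPoly (deleteSet G {u, v}) = ∑ s ∈ range (Nat.card V),
      C ((-1 : ℝ) ^ s * (numMatchings (deleteSet G {u, v}) s : ℝ)) *
        X ^ (Nat.card V - 2 * (s + 1)) := by
  have hn : 1 ≤ Nat.card V := Nat.card_pos_iff.mpr ⟨⟨v⟩, inferInstance⟩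
  have hcard : Nat.card ↥({u, v}ᶜ : Set V) = Nat.card V - 2 := by
    rw [Nat.card_coe_set_eq, Set.ncard_compl, Set.ncard_pair huv]
  rw [matchingPoly_eq_sum_range _ (m := Nat.card V) (by omega), hcard]
  refine sum_congr rfl fun s _ => ?_
  congr 2
  omega

theorem matchingPoly_eq_X_mul_sub_sum [Fintype V] (G : SimpleGraph V) [DecidableRel G.Adj]
    (v : V) :
    matchingPoly G = X * matchingPoly (deleteVert G v) -
      ∑ u ∈ G.neighborFinset v, matchingPoly (deleteSet G {u, v}) := by
  have hpair : ∀ u ∈ G.neighborFinset v, matchingPoly (deleteSet G {u, v}) = _ :=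
    fun u hu => matchingPoly_deleteSet_pair G (G.ne_of_adj ((G.mem_neighborFinset v u).mp hu)).symm
  rw [matchingPoly_eq_X_pow_add_sum, X_mul_matchingPoly_deleteVert, sum_congr rfl hpair,
    sum_comm, add_sub_assoc, ← sum_sub_distrib]
  congr 1
  refine sum_congr rfl fun s _ => ?_
  rw [numMatchings_succ G v s, ← sum_mul, ← map_sum, ← sub_mul, ← map_sub, ← mul_sum]
  congr 2
  push_cast
  ring

/-- In a θ-super positive graph every vertex v has a neighbour u with mult(θ, G\{u,v}) = 0. -/
theorem stmt_7 {V : Type*} [Fintype V] (θ : ℝ) (G : SimpleGraph V)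
    (h : IsSuperPositive θ G) (v : V) :
    ∃ u : V, G.Adj u v ∧ mult θ (deleteSet G {u, v}) = 0 := by
  classical
  obtain ⟨hG, hGv⟩ := h
  have hroot_v : (matchingPoly (deleteVert G v)).IsRoot θ :=
    (rootMultiplicity_pos'.mp (by rw [← mult, hGv v]; exact one_pos)).2
  have hnot_root : ¬ (matchingPoly G).IsRoot θ := fun hroot =>
    (rootMultiplicity_pos (matchingPoly_ne_zero G)).mpr hroot |>.ne' hG
  have hsum : ∑ u ∈ G.neighborFinset v, (matchingPoly (deleteSet G {u, v})).eval θ ≠ 0 := by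
    rw [IsRoot, matchingPoly_eq_X_mul_sub_sum G v, eval_sub, eval_mul, hroot_v.eq_zero,
      mul_zero, zero_sub, eval_finsetSum] at hnot_root
    exact fun h => hnot_root (by rw [h, neg_zero])
  obtain ⟨u, hu, hne⟩ := exists_ne_zero_of_sum_ne_zero hsum
  exact ⟨u, ((G.mem_neighborFinset v u).mp hu).symm, rootMultiplicity_eq_zero hne⟩

end MatchPoly
end

section
/- Let θ be a real number, let G be θ-super positive, and let e=(u,v) be an edge of G such that {u,v} is a θ-extreme set in G. Then the graph G−e obtained by deleting the edge e from G is θ-super positive. -/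
open Polynomial

/-!
Write `μ_S` for the matching polynomial of the subgraph induced on `S`. The recurrences
`μ_S(G) = μ_S(G - uv) - μ_{S-u-v}(G)` and `μ_S = x μ_{S-u} - ∑_{z ∼ u} μ_{S-u-z}`,
the identity `μ_S' = ∑_v μ_{S-v}` and Godsil's inequality `μ_S μ_{S-u-v} ≤ μ_{S-u} μ_{S-v}`
give two interlacing facts: a double root `θ` of `μ_S` is a root of every `μ_{S-v}` (the values
`μ_{S-v}(θ)` sum to `0` and have pairwise nonnegative products), and a double root of `μ_{S-u}`
is a root of `μ_S`.

Since `θ` is a double root of `μ(G ∖ uv)`, `μ(G - e) = μ(G) + μ(G ∖ uv)` does not vanish at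
`θ`. For `w ∉ {u, v}`, `μ((G - e) ∖ w) = μ(G ∖ w) + μ(G ∖ uvw)` vanishes at `θ` by the first
fact, and `θ` is not a double root of it by the second; for `w ∈ {u, v}`, `(G - e) ∖ w = G ∖ w`.
-/

open Finset

theorem Finset.eq_zero_of_sum_eq_zero_of_mul_nonneg {ι R : Type*} [DecidableEq ι] [CommRing R]
    [LinearOrder R] [IsStrictOrderedRing R] {s : Finset ι} {f : ι → R}
    (hsum : ∑ i ∈ s, f i = 0) (hf : ∀ i ∈ s, ∀ j ∈ s, i ≠ j → 0 ≤ f i * f j) {i : ι} (hi : i ∈ s) :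
    f i = 0 := by
  have : f i * f i ≤ 0 :=
    calc f i * f i ≤ f i * f i + ∑ j ∈ s.erase i, f i * f j :=
          le_add_of_nonneg_right <| sum_nonneg fun j hj =>
            hf i hi j (mem_of_mem_erase hj) (ne_of_mem_erase hj).symm
      _ = f i * ∑ j ∈ s, f j := by rw [mul_sum, add_sum_erase s (fun j => f i * f j) hi]
      _ = 0 := by rw [hsum, mul_zero]
  exact mul_self_eq_zero.1 (le_antisymm this (mul_self_nonneg _))

namespace MatchPoly

variable {V : Type*}

def IsMatching (G : SimpleGraph V) (M : Finset (Sym2 V)) : Prop :=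
  (M : Set (Sym2 V)) ⊆ G.edgeSet ∧
    (M : Set (Sym2 V)).Pairwise fun e f => ∀ v : V, v ∈ e → v ∉ f

section MatchingsOn

variable (G : SimpleGraph V)

open Classical in
noncomputable def matchingsOn (S : Finset V) : Finset (Finset (Sym2 V)) :=
  {M ∈ S.sym2.powerset | IsMatching G M}

/-- The matching polynomial of the subgraph of `G` induced on `S`, as a sum over matchings. -/
noncomputable def matchingPolyOn (S : Finset V) : ℝ[X] :=
  ∑ M ∈ matchingsOn G S, C ((-1) ^ #M) * X ^ (#S - 2 * #M)

variable {G} {S : Finset V} {M : Finset (Sym2 V)}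

theorem mem_matchingsOn : M ∈ matchingsOn G S ↔ M ⊆ S.sym2 ∧ IsMatching G M := by
  classical
  simp [matchingsOn]

theorem empty_mem_matchingsOn : ∅ ∈ matchingsOn G S := by
  simp [mem_matchingsOn, IsMatching]

variable [DecidableEq V]

theorem IsMatching.card_biUnion_toFinset (hM : IsMatching G M) :
    #(M.biUnion Sym2.toFinset) = 2 * #M := by
  rw [card_biUnion, sum_const_nat fun e he => Sym2.card_toFinset_of_not_isDiag e
    (G.not_isDiag_of_mem_edgeSet (hM.1 he)), mul_comm]
  intro e he f hf hef
  exact disjoint_left.2 fun v hve hvf =>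
    hM.2 he hf hef v (Sym2.mem_toFinset.1 hve) (Sym2.mem_toFinset.1 hvf)

theorem biUnion_toFinset_subset (hM : M ⊆ S.sym2) :
    M.biUnion Sym2.toFinset ⊆ S := by
  intro v hv
  obtain ⟨e, he, hve⟩ := mem_biUnion.1 hv
  exact mem_sym2_iff.1 (hM he) v (Sym2.mem_toFinset.1 hve)

theorem two_mul_card_le (hM : M ∈ matchingsOn G S) : 2 * #M ≤ #S := by
  rw [mem_matchingsOn] at hM
  rw [← hM.2.card_biUnion_toFinset]
  exact card_le_card (biUnion_toFinset_subset hM.1)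

theorem card_filter_uncovered (hM : M ∈ matchingsOn G S) :
    #{v ∈ S | ∀ e ∈ M, v ∉ e} = #S - 2 * #M := by
  rw [mem_matchingsOn] at hM
  rw [← hM.2.card_biUnion_toFinset, ← card_sdiff_of_subset (biUnion_toFinset_subset hM.1)]
  congr 1
  ext v
  simp

theorem matchingsOn_erase (u : V) :
    matchingsOn G (S.erase u) = {M ∈ matchingsOn G S | ∀ e ∈ M, u ∉ e} := by
  ext M
  simp only [mem_filter, mem_matchingsOn, subset_iff, mem_sym2_iff, mem_erase]
  grind

theorem matchingsOn_deleteEdges (e : Sym2 V) :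
    matchingsOn (G.deleteEdges {e}) S = {M ∈ matchingsOn G S | e ∉ M} := by
  ext M
  simp only [mem_filter, mem_matchingsOn, IsMatching, SimpleGraph.edgeSet_deleteEdges,
    Set.subset_sdiff, Set.disjoint_singleton_right, mem_coe]
  tauto

theorem isMatching_insert {e : Sym2 V} (he : e ∉ M) :
    IsMatching G (insert e M) ↔
      e ∈ G.edgeSet ∧ IsMatching G M ∧ ∀ f ∈ M, ∀ v ∈ e, v ∉ f := by
  simp only [IsMatching, coe_insert, Set.insert_subset_iff, Set.pairwise_insert, mem_coe]
  constructor
  · rintro ⟨⟨hE, hM⟩, hpw, hnew⟩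
    exact ⟨hE, ⟨hM, hpw⟩, fun f hf => (hnew f hf (ne_of_mem_of_not_mem hf he).symm).1⟩
  · rintro ⟨hE, ⟨hM, hpw⟩, hnew⟩
    exact ⟨⟨hE, hM⟩, hpw, fun f hf _ =>
      ⟨hnew f hf, fun v hvf hve => hnew f hf v hve hvf⟩⟩

theorem sum_matchingsOn_filter_mem {u v : V} (huv : G.Adj u v) (hu : u ∈ S) (hv : v ∈ S) :
    ∑ M ∈ matchingsOn G S with s(u, v) ∈ M, C ((-1) ^ #M) * X ^ (#S - 2 * #M)
      = -matchingPolyOn G ((S.erase u).erase v) := by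
  rw [matchingPolyOn, matchingsOn_erase, matchingsOn_erase, filter_filter, ← sum_neg_distrib]
  symm
  refine sum_nbij' (insert s(u, v)) (·.erase s(u, v)) ?_ ?_ ?_ ?_ ?_
  · simp only [mem_filter, mem_matchingsOn, mem_insert_self, and_true]
    rintro M ⟨⟨hMS, hM⟩, hMu, hMv⟩
    have hnew : ∀ f ∈ M, ∀ w ∈ s(u, v), w ∉ f := by
      intro f hf w hw
      rcases Sym2.mem_iff.1 hw with rfl | rfl
      exacts [hMu f hf, hMv f hf]
    have he : s(u, v) ∉ M := fun h => hMu _ h (Sym2.mem_mk_left u v)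
    refine ⟨insert_subset (mk_mem_sym2_iff.2 ⟨hu, hv⟩) hMS, ?_⟩
    exact (isMatching_insert he).2 ⟨huv, hM, hnew⟩
  · simp only [mem_filter, mem_matchingsOn]
    rintro M ⟨⟨hMS, hM⟩, he⟩
    rw [← insert_erase he, isMatching_insert (notMem_erase _ _)] at hM
    obtain ⟨-, hM', hnew⟩ := hM
    exact ⟨⟨(erase_subset _ _).trans hMS, hM'⟩,
      fun f hf => hnew f hf u (Sym2.mem_mk_left u v),
      fun f hf => hnew f hf v (Sym2.mem_mk_right u v)⟩
  · intro M hM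
    exact erase_insert fun h => (mem_filter.1 hM).2.1 _ h (Sym2.mem_mk_left u v)
  · intro M hM
    exact insert_erase (mem_filter.1 hM).2
  · intro M hM
    have he : s(u, v) ∉ M := fun h => (mem_filter.1 hM).2.1 _ h (Sym2.mem_mk_left u v)
    rw [card_insert_of_notMem he, card_erase_of_mem (mem_erase.2 ⟨huv.ne', hv⟩),
      card_erase_of_mem hu, pow_succ, mul_neg_one, map_neg, neg_mul]
    congr 3
    omega

theorem matchingPolyOn_deleteEdges {u v : V} (huv : G.Adj u v) (hu : u ∈ S) (hv : v ∈ S) :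
    matchingPolyOn (G.deleteEdges {s(u, v)}) S
      = matchingPolyOn G S + matchingPolyOn G ((S.erase u).erase v) := by
  rw [← neg_neg (matchingPolyOn G ((S.erase u).erase v)),
    ← sum_matchingsOn_filter_mem huv hu hv, matchingPolyOn, matchingPolyOn,
    matchingsOn_deleteEdges,
    ← sum_filter_not_add_sum_filter (matchingsOn G S) (s(u, v) ∈ ·)]
  ring

theorem matchingPolyOn_deleteEdges_of_notMem {e : Sym2 V} (he : e ∉ S.sym2) :
    matchingPolyOn (G.deleteEdges {e}) S = matchingPolyOn G S := by
  rw [matchingPolyOn, matchingPolyOn, matchingsOn_deleteEdges, filter_true_of_mem]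
  exact fun M hM heM => he ((mem_matchingsOn.1 hM).1 heM)

theorem sum_matchingsOn_filter_covers [DecidableRel G.Adj] {u : V} (hu : u ∈ S) :
    ∑ M ∈ matchingsOn G S with ¬∀ e ∈ M, u ∉ e, C ((-1) ^ #M) * X ^ (#S - 2 * #M)
      = -∑ z ∈ S with G.Adj u z, matchingPolyOn G ((S.erase u).erase z) := by
  have hcover : {M ∈ matchingsOn G S | ¬∀ e ∈ M, u ∉ e}
      = {z ∈ S | G.Adj u z}.biUnion fun z => {M ∈ matchingsOn G S | s(u, z) ∈ M} := by
    ext M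
    simp only [mem_filter, mem_biUnion, not_forall, not_not, mem_matchingsOn]
    constructor
    · rintro ⟨⟨hMS, hM⟩, e, he, hue⟩
      obtain ⟨z, rfl⟩ := Sym2.mem_iff_exists.1 hue
      exact ⟨z, ⟨(mk_mem_sym2_iff.1 (hMS he)).2, hM.1 he⟩, ⟨hMS, hM⟩, he⟩
    · rintro ⟨z, -, hM, he⟩
      exact ⟨hM, _, he, Sym2.mem_mk_left u z⟩
  have hdisj : ((({z ∈ S | G.Adj u z}) : Finset V) : Set V).PairwiseDisjoint
      fun z => {M ∈ matchingsOn G S | s(u, z) ∈ M} := by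
    intro z₁ _ z₂ _ hz
    refine disjoint_left.2 fun M h₁ h₂ => ?_
    obtain ⟨hM, he₁⟩ := mem_filter.1 h₁
    exact (mem_matchingsOn.1 hM).2.2 he₁ (mem_filter.1 h₂).2
      (fun h => hz (Sym2.congr_right.1 h)) u (Sym2.mem_mk_left u z₁) (Sym2.mem_mk_left u z₂)
  rw [hcover, sum_biUnion hdisj, ← sum_neg_distrib]
  refine sum_congr rfl fun z hz => ?_
  obtain ⟨hz, huz⟩ := mem_filter.1 hz
  exact sum_matchingsOn_filter_mem huz hu hz

theorem matchingPolyOn_eq_X_mul_sub [DecidableRel G.Adj] {u : V} (hu : u ∈ S) :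
    matchingPolyOn G S = X * matchingPolyOn G (S.erase u)
      - ∑ z ∈ S with G.Adj u z, matchingPolyOn G ((S.erase u).erase z) := by
  have huncovered :
      ∑ M ∈ matchingsOn G S with ∀ e ∈ M, u ∉ e, C ((-1) ^ #M) * X ^ (#S - 2 * #M)
        = X * matchingPolyOn G (S.erase u) := by
    rw [matchingPolyOn, ← matchingsOn_erase, mul_sum]
    refine sum_congr rfl fun M hM => ?_
    have hM := two_mul_card_le hM
    have hS := card_pos.2 ⟨u, hu⟩
    rw [card_erase_of_mem hu] at hM ⊢
    rw [mul_left_comm, ← pow_succ']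
    congr 2
    omega
  rw [matchingPolyOn, ← sum_filter_add_sum_filter_not _ (fun M => ∀ e ∈ M, u ∉ e),
    sum_matchingsOn_filter_covers hu, huncovered, sub_eq_add_neg]

theorem derivative_matchingPolyOn :
    derivative (matchingPolyOn G S) = ∑ v ∈ S, matchingPolyOn G (S.erase v) := by
  symm
  calc ∑ v ∈ S, matchingPolyOn G (S.erase v)
      = ∑ v ∈ S, ∑ M ∈ matchingsOn G S with ∀ e ∈ M, v ∉ e,
          C ((-1) ^ #M) * X ^ (#S - 1 - 2 * #M) := by
        refine sum_congr rfl fun v hv => ?_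
        rw [matchingPolyOn, matchingsOn_erase, card_erase_of_mem hv]
    _ = ∑ M ∈ matchingsOn G S, ∑ v ∈ S with ∀ e ∈ M, v ∉ e,
          C ((-1) ^ #M) * X ^ (#S - 1 - 2 * #M) :=
        sum_comm' fun v M => by simp only [mem_filter]; tauto
    _ = ∑ M ∈ matchingsOn G S, derivative (C ((-1) ^ #M) * X ^ (#S - 2 * #M)) := by
        refine sum_congr rfl fun M hM => ?_
        rw [sum_const, card_filter_uncovered hM, derivative_C_mul_X_pow, nsmul_eq_mul, C_mul,
          map_natCast, Nat.sub_right_comm]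
        ring
    _ = derivative (matchingPolyOn G S) := by rw [matchingPolyOn, derivative_sum]

theorem matchingPolyOn_monic : (matchingPolyOn G S).Monic := by
  rw [matchingPolyOn, ← add_sum_erase _ _ empty_mem_matchingsOn, card_empty, mul_zero,
    Nat.sub_zero, pow_zero, map_one, one_mul]
  refine monic_X_pow_add <| (degree_sum_le _ _).trans_lt <|
    (Finset.sup_lt_iff (WithBot.bot_lt_coe _)).2 fun M hM => ?_
  obtain ⟨hne, hM⟩ := mem_erase.1 hM
  have hcard := two_mul_card_le hM
  have hpos := card_pos.2 (nonempty_iff_ne_empty.2 hne)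
  exact (degree_C_mul_X_pow_le _ _).trans_lt (by exact_mod_cast (by omega : #S - 2 * #M < #S))

theorem matchingPolyOn_ne_zero : matchingPolyOn G S ≠ 0 :=
  matchingPolyOn_monic.ne_zero

end MatchingsOn

section Interlacing

variable [DecidableEq V] {G : SimpleGraph V} [DecidableRel G.Adj] {S : Finset V}

theorem eval_matchingPolyOn_eq (x : ℝ) {u : V} (hu : u ∈ S) :
    (matchingPolyOn G S).eval x = x * (matchingPolyOn G (S.erase u)).eval x
      - ∑ z ∈ S with G.Adj u z, (matchingPolyOn G ((S.erase u).erase z)).eval x := by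
  simp [matchingPolyOn_eq_X_mul_sub hu, eval_finsetSum]

theorem eval_mul_eval_le (x : ℝ) {u v : V} (hu : u ∈ S) (hv : v ∈ S) (huv : u ≠ v) :
    (matchingPolyOn G S).eval x * (matchingPolyOn G ((S.erase u).erase v)).eval x
      ≤ (matchingPolyOn G (S.erase u)).eval x * (matchingPolyOn G (S.erase v)).eval x := by
  induction S using Finset.strongInduction generalizing u v with
  | H S ih =>
  rw [eval_matchingPolyOn_eq x hu, eval_matchingPolyOn_eq x (mem_erase.2 ⟨huv, hu⟩),
    erase_right_comm (a := v), filter_erase]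
  set Z := {z ∈ S | G.Adj u z}
  set a := (matchingPolyOn G (S.erase u)).eval x
  set b := (matchingPolyOn G ((S.erase u).erase v)).eval x
  set f := fun z => (matchingPolyOn G ((S.erase u).erase z)).eval x
  set g := fun z => (matchingPolyOn G (((S.erase u).erase v).erase z)).eval x
  have hIH : ∀ z ∈ Z.erase v, a * g z ≤ b * f z := by
    intro z hz
    obtain ⟨hzv, hzS, huz⟩ := by simpa [Z] using hz
    dsimp only [g]
    rw [mul_comm b, erase_right_comm (a := v)]
    exact ih (S.erase u) (erase_ssubset hu) (mem_erase.2 ⟨huz.ne', hzS⟩)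
      (mem_erase.2 ⟨huv.symm, hv⟩) hzv
  have hZ : b * ∑ z ∈ Z.erase v, f z ≤ b * ∑ z ∈ Z, f z := by
    by_cases hvZ : v ∈ Z
    · rw [← sum_erase_add Z _ hvZ, mul_add]
      exact le_add_of_nonneg_right (mul_self_nonneg b)
    · rw [erase_eq_of_notMem hvZ]
  calc (x * a - ∑ z ∈ Z, f z) * b = x * a * b - b * ∑ z ∈ Z, f z := by ring
    _ ≤ x * a * b - b * ∑ z ∈ Z.erase v, f z := by linarith
    _ ≤ x * a * b - a * ∑ z ∈ Z.erase v, g z := by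
      rw [mul_sum, mul_sum]
      exact sub_le_sub_left (sum_le_sum hIH) _
    _ = a * (x * b - ∑ z ∈ Z.erase v, g z) := by ring

end Interlacing

section Embedding

variable {W : Type*} {H : SimpleGraph W} {G : SimpleGraph V} (φ : H ↪g G)

theorem isMatching_map_sym2Map {M : Finset (Sym2 W)} :
    IsMatching G (M.map φ.toEmbedding.sym2Map) ↔ IsMatching H M := by
  have hinj : Set.InjOn φ.toEmbedding.sym2Map M := φ.toEmbedding.sym2Map.injective.injOn
  have hrel : Function.onFun (fun e f : Sym2 V => ∀ v ∈ e, v ∉ f) φ.toEmbedding.sym2Map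
      = fun e f => ∀ w ∈ e, w ∉ f := by
    funext e f
    simp only [Function.onFun, eq_iff_iff]
    aesop
  have hedge : φ.toEmbedding.sym2Map ⁻¹' G.edgeSet = H.edgeSet := φ.preimage_edgeSet
  simp only [IsMatching, coe_map, Set.image_subset_iff, hinj.pairwise_image, hrel, hedge]

theorem numMatchings_eq_card [Fintype W] (r : ℕ) :
    numMatchings H r = #{M ∈ matchingsOn G (univ.map φ.toEmbedding) | #M = r} := by
  classical
  rw [numMatchings, Nat.card_eq_fintype_card, Fintype.card_subtype]
  refine card_nbij (·.map φ.toEmbedding.sym2Map) ?_ (fun M _ N _ h => map_injective _ h) ?_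
  · intro M hM
    simp only [coe_filter, mem_univ, true_and, Set.mem_ofPred_eq, mem_matchingsOn,
      card_map] at hM ⊢
    refine ⟨⟨?_, (isMatching_map_sym2Map φ).2 hM.2⟩, hM.1⟩
    rw [sym2_map, sym2_univ]
    exact map_subset_map.2 (subset_univ M)
  · intro N hN
    simp only [coe_filter, Set.mem_ofPred_eq, mem_matchingsOn, sym2_map, subset_map_iff] at hN
    obtain ⟨⟨⟨M, -, rfl⟩, hN⟩, hcard⟩ := hN
    refine ⟨M, ?_, rfl⟩
    simp only [coe_filter, mem_univ, true_and, Set.mem_ofPred_eq]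
    exact ⟨by simpa using hcard, (isMatching_map_sym2Map φ).1 hN⟩

theorem matchingPoly_eq_matchingPolyOn [Fintype W] :
    matchingPoly H = matchingPolyOn G (univ.map φ.toEmbedding) := by
  classical
  set T := univ.map φ.toEmbedding
  have hT : Nat.card W = #T := by rw [card_map, card_univ, Nat.card_eq_fintype_card]
  have hcard : ∀ M ∈ matchingsOn G T, #M ∈ range (#T + 1) := fun M hM =>
    mem_range_succ_iff.2 <| (le_mul_of_one_le_left' one_le_two).trans (two_mul_card_le hM)
  rw [matchingPoly, matchingPolyOn, hT, ← sum_fiberwise_of_maps_to hcard]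
  refine sum_congr rfl fun r _ => ?_
  rw [numMatchings_eq_card φ, sum_congr rfl fun M hM => by rw [(mem_filter.1 hM).2], sum_const,
    nsmul_eq_mul, C_mul, map_natCast]
  ring

end Embedding

section Multiplicity

variable [DecidableEq V] {G : SimpleGraph V} {S : Finset V} {θ : ℝ}

theorem isRoot_erase_of_one_lt_rootMultiplicity
    (h : 1 < (matchingPolyOn G S).rootMultiplicity θ) {v : V} (hv : v ∈ S) :
    (matchingPolyOn G (S.erase v)).IsRoot θ := by
  classical
  obtain ⟨h₀, h₁⟩ := (one_lt_rootMultiplicity_iff_isRoot matchingPolyOn_ne_zero).1 h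
  rw [IsRoot, derivative_matchingPolyOn, eval_finsetSum] at h₁
  refine eq_zero_of_sum_eq_zero_of_mul_nonneg h₁ (fun i hi j hj hij => ?_) hv
  simpa [h₀.eq_zero] using eval_mul_eval_le (G := G) θ hi hj hij

theorem isRoot_of_one_lt_rootMultiplicity_erase {u : V} (hu : u ∈ S)
    (h : 1 < (matchingPolyOn G (S.erase u)).rootMultiplicity θ) :
    (matchingPolyOn G S).IsRoot θ := by
  classical
  have hroot : (matchingPolyOn G (S.erase u)).IsRoot θ :=
    (rootMultiplicity_pos matchingPolyOn_ne_zero).1 (one_pos.trans h)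
  rw [IsRoot, eval_matchingPolyOn_eq θ hu, hroot.eq_zero, mul_zero, zero_sub, neg_eq_zero]
  refine sum_eq_zero fun z hz => ?_
  obtain ⟨hzS, huz⟩ := mem_filter.1 hz
  exact isRoot_erase_of_one_lt_rootMultiplicity h (mem_erase.2 ⟨huz.ne', hzS⟩)

end Multiplicity

def IsSuperPositiveOn [DecidableEq V] (θ : ℝ) (G : SimpleGraph V) (S : Finset V) : Prop :=
  (matchingPolyOn G S).rootMultiplicity θ = 0 ∧
    ∀ w ∈ S, (matchingPolyOn G (S.erase w)).rootMultiplicity θ = 1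

theorem IsSuperPositiveOn.deleteEdges [DecidableEq V] {θ : ℝ} {G : SimpleGraph V} {S : Finset V}
    (h : IsSuperPositiveOn θ G S) {u v : V} (huv : G.Adj u v) (hu : u ∈ S) (hv : v ∈ S)
    (hext : 1 < (matchingPolyOn G ((S.erase u).erase v)).rootMultiplicity θ) :
    IsSuperPositiveOn θ (G.deleteEdges {s(u, v)}) S := by
  obtain ⟨h₀, h₁⟩ := h
  have hroot : ∀ {T : Finset V}, 0 < (matchingPolyOn G T).rootMultiplicity θ →
      (matchingPolyOn G T).IsRoot θ := (rootMultiplicity_pos matchingPolyOn_ne_zero).1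
  have hG : ¬(matchingPolyOn G S).IsRoot θ := fun hr =>
    ((rootMultiplicity_pos matchingPolyOn_ne_zero).2 hr).ne' h₀
  have hGe : ¬(matchingPolyOn (G.deleteEdges {s(u, v)}) S).IsRoot θ := by
    rwa [matchingPolyOn_deleteEdges huv hu hv, IsRoot, eval_add,
      (hroot (one_pos.trans hext)).eq_zero, add_zero]
  refine ⟨rootMultiplicity_eq_zero hGe, fun w hw => ?_⟩
  by_cases hwuv : w = u ∨ w = v
  · rw [matchingPolyOn_deleteEdges_of_notMem (by rcases hwuv with rfl | rfl <;> simp), h₁ w hw]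
  obtain ⟨hwu, hwv⟩ := not_or.1 hwuv
  refine le_antisymm (not_lt.1 fun h => hGe (isRoot_of_one_lt_rootMultiplicity_erase hw h))
    ((rootMultiplicity_pos matchingPolyOn_ne_zero).2 ?_)
  have hwuv' : w ∈ (S.erase u).erase v := mem_erase.2 ⟨hwv, mem_erase.2 ⟨hwu, hw⟩⟩
  rw [matchingPolyOn_deleteEdges huv (mem_erase.2 ⟨Ne.symm hwu, hu⟩)
      (mem_erase.2 ⟨Ne.symm hwv, hv⟩), IsRoot, eval_add, (hroot (h₁ w hw).symm.le).eq_zero,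
    zero_add, erase_right_comm (a := w), erase_right_comm (s := S.erase u) (a := w)]
  exact isRoot_erase_of_one_lt_rootMultiplicity hext hwuv'

section Fintype

variable [Fintype V] {θ : ℝ} {G : SimpleGraph V}

theorem mult_induce (s : Set V) [DecidablePred (· ∈ s)] :
    mult θ (G.induce s) = (matchingPolyOn G {v | v ∈ s}).rootMultiplicity θ := by
  rw [mult, matchingPoly_eq_matchingPolyOn (SimpleGraph.Embedding.induce s), ← univ_map_subtype]
  rfl

theorem mult_deleteVert [DecidableEq V] (w : V) :
    mult θ (deleteVert G w) = (matchingPolyOn G (univ.erase w)).rootMultiplicity θ := by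
  rw [deleteVert, mult_induce]
  congr 3
  ext; simp

theorem mult_deleteSet_pair [DecidableEq V] (u v : V) :
    mult θ (deleteSet G {u, v})
      = (matchingPolyOn G ((univ.erase u).erase v)).rootMultiplicity θ := by
  rw [deleteSet, mult_induce]
  congr 3
  ext; simp; tauto

theorem isSuperPositive_iff [DecidableEq V] :
    IsSuperPositive θ G ↔ IsSuperPositiveOn θ G univ := by
  have hG : mult θ G = (matchingPolyOn G univ).rootMultiplicity θ := by
    rw [mult, matchingPoly_eq_matchingPolyOn (SimpleGraph.Embedding.refl (G := G)),
      univ_map_embedding]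
  simp [IsSuperPositive, IsSuperPositiveOn, hG, mult_deleteVert]

end Fintype

/-- Deleting a θ-extreme edge from a θ-super positive graph keeps it θ-super positive. -/
theorem stmt_15 {V : Type*} [Fintype V] (θ : ℝ) (G : SimpleGraph V)
    (h : IsSuperPositive θ G) (u v : V) (huv : G.Adj u v)
    (hext : IsExtreme θ G {u, v}) :
    IsSuperPositive θ (G.deleteEdges {s(u, v)}) := by
  classical
  rw [IsExtreme, mult_deleteSet_pair, Set.ncard_pair huv.ne, h.1] at hext
  rw [isSuperPositive_iff] at h ⊢
  exact h.deleteEdges huv (mem_univ u) (mem_univ v) (by omega)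

end MatchPoly
end
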